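/- Let u = αx + βy + γz with α, β, γ ∈ O_K and ν_D(u) = 0 (note τ(u) = -u, so u is a (-1)-symmetric unit of O_D). Then α ∈ O_K^× and there exists an invertible t ∈ D with u = τ(t)·(αx)·t; that is, ⟨u⟩ ≅ ⟨αx⟩ as skew-hermitian forms over (D, τ). -/

import Mathlib

noncomputable section

/-- A surjective discrete valuation `ν : K → ℤ` on a field `K`
(the value of `ν` at `0` is irrelevant: only nonzero elements are constrained). -/
structure DVal (K : Type) [Field K] : Type where
  ν : K → ℤ
  ν_mul : ∀ x y : K, x ≠ 0 → y ≠ 0 → ν (x * y) = ν x + ν y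
  ν_add : ∀ x y : K, x ≠ 0 → y ≠ 0 → x + y ≠ 0 → min (ν x) (ν y) ≤ ν (x + y)
  ν_one : ν 1 = 0
  ν_surj : ∀ n : ℤ, ∃ x : K, x ≠ 0 ∧ ν x = n

namespace DVal

variable {K : Type} [Field K]

/-- `x` belongs to the valuation ring `O_K`. -/
def Int (V : DVal K) (x : K) : Prop := x = 0 ∨ 0 ≤ V.ν x

/-- `x` is a unit of the valuation ring `O_K`. -/
def IntUnit (V : DVal K) (x : K) : Prop := x ≠ 0 ∧ V.ν x = 0

/-- `x` belongs to the maximal ideal `m_K` of the valuation ring `O_K`. -/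
def MaxIdeal (V : DVal K) (x : K) : Prop := x = 0 ∨ 1 ≤ V.ν x

/-- `K` is complete with respect to the valuation `ν`: every Cauchy sequence converges. -/
def IsComplete (V : DVal K) : Prop :=
  ∀ f : ℕ → K,
    (∀ M : ℤ, ∃ N : ℕ, ∀ m n : ℕ, N ≤ m → N ≤ n →
      f m - f n = 0 ∨ M ≤ V.ν (f m - f n)) →
    ∃ L : K, ∀ M : ℤ, ∃ N : ℕ, ∀ n : ℕ, N ≤ n →
      f n - L = 0 ∨ M ≤ V.ν (f n - L)

/-- The residue field `k = O_K/m_K` has characteristic different from `2`,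
i.e. `2` is a unit of the valuation ring `O_K`. -/
def ResCharNeTwo (V : DVal K) : Prop := (2 : K) ≠ 0 ∧ V.ν 2 = 0

end DVal

/-- The reduced norm of a quaternion `u = δ + αx + βy + γz ∈ ℍ[K,a,b]`:
`Nrd u = u·τ(u) = δ² - aα² - bβ² + abγ²`. -/
def qnrd {K : Type} [Field K] (a b : K) (u : QuaternionAlgebra K a 0 b) : K :=
  u.re ^ 2 - a * u.imI ^ 2 - b * u.imJ ^ 2 + a * b * u.imK ^ 2

/-- The canonical involution `τ(δ + αx + βy + γz) = δ - αx - βy - γz` of `ℍ[K,a,b]`. -/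
def qtau {K : Type} [Field K] {a b : K} (u : QuaternionAlgebra K a 0 b) :
    QuaternionAlgebra K a 0 b :=
  ⟨u.re, -u.imI, -u.imJ, -u.imK⟩

/-- The norm form `⟨1,-a,-b,ab⟩` of `ℍ[K,a,b]` is anisotropic over `K`
(equivalently, `ℍ[K,a,b]` is a division ring). -/
def QAniso {K : Type} [Field K] (a b : K) : Prop :=
  ∀ d e f g : K, d ^ 2 - a * e ^ 2 - b * f ^ 2 + a * b * g ^ 2 = 0 →
    d = 0 ∧ e = 0 ∧ f = 0 ∧ g = 0

/-- The valuation `ν_D(u) = (1/2)·ν_K(Nrd u)` of the quaternion division algebra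
`D = ℍ[K,a,b]` (at nonzero `u`). -/
def qnu {K : Type} [Field K] (V : DVal K) (a b : K) (u : QuaternionAlgebra K a 0 b) : ℚ :=
  (V.ν (qnrd a b u) : ℚ) / 2

/-
Since `ν_D(u) = 0`, the reduced norm `Nrd u = -(aα² + ϖ(β² - aγ²))` is a unit; its second summand
lies in the maximal ideal, so `aα²`, hence `α`, is a unit and `λ = Nrd u / Nrd(αx)` is a principal
unit. If `e² = λ`, the pure quaternions `v = αx` and `w = u / e` have the same square `q = aα²`, so
`T = q + v w` satisfies `v T = q (v + w) = T w`, i.e. `τ(T)·v·T = Nrd(T)·w`. Rescaled to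
`T = aα(1 + e) + aγ·y + β·z` this reads `τ(T)·(αx)·T = 2a²α²(1 + e)·u`, and as `(1 + e) / 2` is
again a principal unit, dividing `T` by `2aα·√((1 + e) / 2)` gives the isometry. Both square roots
of principal units come from Newton's iteration, which converges because `K` is complete and `2`
is a unit.
-/

namespace DVal

variable {K : Type} [Field K]

/-- `ν x ≥ M`, reading `ν 0` as `+∞`. -/
def ValGe (V : DVal K) (x : K) (M : ℤ) : Prop := x = 0 ∨ M ≤ V.ν x

variable {V : DVal K} {x y : K} {M N : ℤ}

theorem ν_neg_one : V.ν (-1 : K) = 0 := by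
  have h := V.ν_mul (-1) (-1) (by norm_num) (by norm_num)
  rw [neg_one_mul, neg_neg, V.ν_one] at h
  omega

theorem ν_neg (hx : x ≠ 0) : V.ν (-x) = V.ν x := by
  rw [← neg_one_mul, V.ν_mul _ _ (by norm_num) hx, ν_neg_one, zero_add]

theorem ν_inv (hx : x ≠ 0) : V.ν x⁻¹ = -V.ν x := by
  have h := V.ν_mul x x⁻¹ hx (inv_ne_zero hx)
  rw [mul_inv_cancel₀ hx, V.ν_one] at h
  omega

theorem ν_add_eq_of_lt (hx : x ≠ 0) (hy : y ≠ 0) (h : V.ν x < V.ν y) :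
    x + y ≠ 0 ∧ V.ν (x + y) = V.ν x := by
  have hxy : x + y ≠ 0 := fun h0 => by
    rw [eq_neg_of_add_eq_zero_right h0, ν_neg hx] at h
    exact h.false
  have h1 := V.ν_add x y hx hy hxy
  have h2 := V.ν_add (x + y) (-y) hxy (neg_ne_zero.2 hy) (by rwa [add_neg_cancel_right])
  rw [add_neg_cancel_right, ν_neg hy] at h2
  refine ⟨hxy, ?_⟩
  rcases min_le_iff.1 h2 with h2 | h2 <;> rcases min_le_iff.1 h1 with h1 | h1 <;> omega

namespace ValGe

theorem mono (hx : V.ValGe x M) (h : N ≤ M) : V.ValGe x N :=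
  hx.imp_right h.trans

theorem neg (hx : V.ValGe x M) : V.ValGe (-x) M := by
  rcases eq_or_ne x 0 with rfl | hx0
  · simpa using hx
  · exact Or.inr ((ν_neg hx0).symm ▸ hx.resolve_left hx0)

theorem add (hx : V.ValGe x M) (hy : V.ValGe y M) : V.ValGe (x + y) M := by
  rcases eq_or_ne x 0 with rfl | hx0
  · simpa using hy
  rcases eq_or_ne y 0 with rfl | hy0
  · simpa using hx
  rcases eq_or_ne (x + y) 0 with hxy | hxy
  · exact Or.inl hxy
  exact Or.inr ((le_min (hx.resolve_left hx0) (hy.resolve_left hy0)).trans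
    (V.ν_add x y hx0 hy0 hxy))

theorem sub (hx : V.ValGe x M) (hy : V.ValGe y M) : V.ValGe (x - y) M := by
  simpa [sub_eq_add_neg] using hx.add hy.neg

theorem mul (hx : V.ValGe x M) (hy : V.ValGe y N) : V.ValGe (x * y) (M + N) := by
  rcases eq_or_ne x 0 with rfl | hx0
  · exact Or.inl (zero_mul y)
  rcases eq_or_ne y 0 with rfl | hy0
  · exact Or.inl (mul_zero x)
  exact Or.inr (V.ν_mul x y hx0 hy0 ▸ add_le_add (hx.resolve_left hx0) (hy.resolve_left hy0))

end ValGe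

theorem IntUnit.mul (hx : V.IntUnit x) (hy : V.IntUnit y) : V.IntUnit (x * y) :=
  ⟨mul_ne_zero hx.1 hy.1, by rw [V.ν_mul x y hx.1 hy.1, hx.2, hy.2, add_zero]⟩

theorem IntUnit.valGe (hx : V.IntUnit x) : V.ValGe x 0 :=
  Or.inr hx.2.ge

theorem ValGe.div_of_intUnit (hx : V.ValGe x M) (hy : V.IntUnit y) : V.ValGe (x / y) M := by
  simpa [div_eq_mul_inv] using
    hx.mul (N := 0) (Or.inr (by rw [ν_inv hy.1, hy.2, neg_zero]))

theorem intUnit_of_valGe_sub_one (h : V.ValGe (x - 1) 1) : V.IntUnit x := by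
  rcases eq_or_ne (x - 1) 0 with h0 | h0
  · rw [sub_eq_zero.1 h0]
    exact ⟨one_ne_zero, V.ν_one⟩
  · have := ν_add_eq_of_lt (V := V) one_ne_zero h0 (by rw [V.ν_one]; linarith [h.resolve_left h0])
    rwa [add_sub_cancel, V.ν_one] at this

theorem eq_zero_of_forall_valGe (h : ∀ n : ℕ, V.ValGe x n) : x = 0 := by
  by_contra hx
  have := (h (V.ν x + 1).toNat).resolve_left hx
  omega

theorem IsComplete.exists_limit (hcomp : V.IsComplete) {f : ℕ → K}
    (hf : ∀ n m : ℕ, n ≤ m → V.ValGe (f m - f n) n) :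
    ∃ L : K, ∀ n : ℕ, V.ValGe (f n - L) n := by
  have hcauchy : ∀ n m : ℕ, V.ValGe (f m - f n) (min n m : ℕ) := by
    intro n m
    rcases le_total n m with h | h
    · simpa [min_eq_left h] using hf n m h
    · simpa [min_eq_right h] using (hf m n h).neg
  obtain ⟨L, hL⟩ := hcomp f fun M => ⟨M.toNat, fun m n hm hn =>
    (hcauchy n m).mono (by omega)⟩
  refine ⟨L, fun n => ?_⟩
  obtain ⟨N, hN⟩ := hL n
  have hm : V.ValGe (f (max N n) - L) n := hN _ (le_max_left _ _)
  have hnm := (hf n (max N n) (le_max_right _ _)).neg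
  rw [neg_sub] at hnm
  simpa using hnm.add hm

def newtonSqrt (w : K) : ℕ → K
  | 0 => 1
  | n + 1 => (newtonSqrt w n + w / newtonSqrt w n) / 2

theorem valGe_newton_step (h2 : V.IntUnit 2) {w : K} (hw : V.ValGe (w - 1) 1)
    (hx : V.ValGe (x - 1) 1) (hxw : V.ValGe (x ^ 2 - w) N) :
    V.ValGe ((x + w / x) / 2 - 1) 1 ∧ V.ValGe (((x + w / x) / 2) ^ 2 - w) (2 * N) ∧
      V.ValGe ((x + w / x) / 2 - x) N := by
  have hx0 := intUnit_of_valGe_sub_one hx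
  have h2x : V.IntUnit (2 * x) := h2.mul hx0
  refine ⟨?_, ?_, ?_⟩
  · have e : (x + w / x) / 2 - 1 = ((x - 1) * (x - 1) + (w - 1)) / (2 * x) := by
      field_simp [h2.1, hx0.1]; ring
    rw [e]
    exact (((hx.mul hx).mono (by norm_num)).add hw).div_of_intUnit h2x
  · have e : ((x + w / x) / 2) ^ 2 - w = (x ^ 2 - w) * (x ^ 2 - w) / (2 * x * (2 * x)) := by
      field_simp [h2.1, hx0.1]; ring
    rw [e, two_mul N]
    exact (hxw.mul hxw).div_of_intUnit (h2x.mul h2x)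
  · have e : (x + w / x) / 2 - x = -(x ^ 2 - w) / (2 * x) := by
      field_simp [h2.1, hx0.1]; ring
    rw [e]
    exact hxw.neg.div_of_intUnit h2x

theorem valGe_newtonSqrt (h2 : V.IntUnit 2) {w : K} (hw : V.ValGe (w - 1) 1) (n : ℕ) :
    V.ValGe (newtonSqrt w n - 1) 1 ∧ V.ValGe (newtonSqrt w n ^ 2 - w) (n + 1) := by
  induction n with
  | zero => exact ⟨Or.inl (sub_self 1), by simpa [newtonSqrt] using hw.neg⟩
  | succ n ih =>
    obtain ⟨h1, hsq, -⟩ := valGe_newton_step h2 hw ih.1 ih.2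
    exact ⟨h1, hsq.mono (by push_cast; omega)⟩

theorem valGe_newtonSqrt_sub (h2 : V.IntUnit 2) {w : K} (hw : V.ValGe (w - 1) 1) {n m : ℕ}
    (hnm : n ≤ m) : V.ValGe (newtonSqrt w m - newtonSqrt w n) n := by
  induction m, hnm using Nat.le_induction with
  | base => exact Or.inl (sub_self _)
  | succ m hm ih =>
    have hstep := (valGe_newton_step h2 hw (valGe_newtonSqrt h2 hw m).1
      (valGe_newtonSqrt h2 hw m).2).2.2
    rw [← sub_add_sub_cancel _ (newtonSqrt w m)]
    exact (hstep.mono (by omega)).add ih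

theorem exists_sq_eq_of_valGe_sub_one (hcomp : V.IsComplete) (hchar : V.ResCharNeTwo)
    {w : K} (hw : V.ValGe (w - 1) 1) : ∃ e : K, e ^ 2 = w ∧ V.ValGe (e - 1) 1 := by
  obtain ⟨L, hL⟩ := hcomp.exists_limit fun n m => valGe_newtonSqrt_sub hchar hw
  have hL1 : V.ValGe (L - 1) 1 := by
    have h1 := (hL 1).neg
    rw [neg_sub] at h1
    simpa using h1.add (valGe_newtonSqrt hchar hw 1).1
  refine ⟨L, sub_eq_zero.1 (eq_zero_of_forall_valGe (V := V) fun n => ?_), hL1⟩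
  obtain ⟨hx1, hxw⟩ := valGe_newtonSqrt hchar hw n
  have hsum : V.ValGe (L + newtonSqrt w n) 0 :=
    (intUnit_of_valGe_sub_one hL1).valGe.add (intUnit_of_valGe_sub_one hx1).valGe
  rw [show L ^ 2 - w = -(newtonSqrt w n - L) * (L + newtonSqrt w n) + (newtonSqrt w n ^ 2 - w)
    by ring]
  exact ((hL n).neg.mul hsum).add (by simpa using hxw.mono (by omega))

theorem intUnit_of_ν_mul_sq_add_eq_zero {A α s : K} (hA : V.IntUnit A) (hα : V.Int α)
    (hs : V.ValGe s 1) (h0 : A * α ^ 2 + s ≠ 0) (hν : V.ν (A * α ^ 2 + s) = 0) :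
    V.IntUnit α := by
  by_contra hunit
  have hα1 : V.ValGe α 1 := by
    rcases eq_or_ne α 0 with hα0 | hα0
    · exact Or.inl hα0
    · have hν0 : V.ν α ≠ 0 := fun h => hunit ⟨hα0, h⟩
      have := hα.resolve_left hα0
      exact Or.inr (by omega)
  have hsum : V.ValGe (A * α ^ 2 + s) 1 := by
    rw [sq]
    exact ((hA.valGe.mul (hα1.mul hα1)).mono (by norm_num)).add hs
  have := hsum.resolve_left h0
  omega

theorem exists_mul_sq_eq_add_and_two_mul_sq_eq (hcomp : V.IsComplete) (hchar : V.ResCharNeTwo)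
    {A s : K} (hA : V.IntUnit A) (hs : V.ValGe s 1) :
    ∃ e p : K, A * e ^ 2 = A + s ∧ 2 * p ^ 2 = 1 + e ∧ p ≠ 0 := by
  obtain ⟨e, he, he1⟩ := exists_sq_eq_of_valGe_sub_one hcomp hchar (w := 1 + s / A)
    (by simpa using hs.div_of_intUnit hA)
  obtain ⟨p, hp, hp1⟩ := exists_sq_eq_of_valGe_sub_one hcomp hchar (w := (1 + e) / 2)
    (by convert he1.div_of_intUnit hchar using 1; field_simp [hchar.1]; ring)
  refine ⟨e, p, ?_, ?_, (intUnit_of_valGe_sub_one hp1).1⟩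
  · rw [he]
    field_simp [hA.1]
  · rw [hp]
    field_simp [hchar.1]

end DVal

section Quaternion

variable {K : Type} [Field K] {a b : K}

theorem qtau_eq_star (u : QuaternionAlgebra K a 0 b) : qtau u = star u := by
  ext <;> simp [qtau]

theorem qnrd_mul (u v : QuaternionAlgebra K a 0 b) :
    qnrd a b (u * v) = qnrd a b u * qnrd a b v := by
  simp only [qnrd, QuaternionAlgebra.re_mul, QuaternionAlgebra.imI_mul,
    QuaternionAlgebra.imJ_mul, QuaternionAlgebra.imK_mul]
  ring

theorem self_mul_star_eq_qnrd (u : QuaternionAlgebra K a 0 b) :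
    u * star u = ((qnrd a b u : K) : QuaternionAlgebra K a 0 b) := by
  rw [QuaternionAlgebra.mul_star_eq_coe]
  congr 1
  simp only [qnrd, QuaternionAlgebra.re_mul, QuaternionAlgebra.re_star, QuaternionAlgebra.imI_star,
    QuaternionAlgebra.imJ_star, QuaternionAlgebra.imK_star]
  ring

theorem star_mul_self_eq_qnrd (u : QuaternionAlgebra K a 0 b) :
    star u * u = ((qnrd a b u : K) : QuaternionAlgebra K a 0 b) := by
  rw [QuaternionAlgebra.star_mul_eq_coe]
  congr 1
  simp only [qnrd, QuaternionAlgebra.re_mul, QuaternionAlgebra.re_star, QuaternionAlgebra.imI_star,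
    QuaternionAlgebra.imJ_star, QuaternionAlgebra.imK_star]
  ring

theorem isUnit_of_qnrd_ne_zero {u : QuaternionAlgebra K a 0 b} (h : qnrd a b u ≠ 0) :
    IsUnit u := by
  refine ⟨⟨u, (qnrd a b u)⁻¹ • star u, ?_, ?_⟩, rfl⟩
  · rw [mul_smul_comm, self_mul_star_eq_qnrd, QuaternionAlgebra.smul_coe, inv_mul_cancel₀ h,
      QuaternionAlgebra.coe_one]
  · rw [smul_mul_assoc, star_mul_self_eq_qnrd, QuaternionAlgebra.smul_coe, inv_mul_cancel₀ h,
      QuaternionAlgebra.coe_one]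

theorem qnrd_ne_zero_of_aniso (h : QAniso a b) {u : QuaternionAlgebra K a 0 b} (hu : u ≠ 0) :
    qnrd a b u ≠ 0 := fun h0 => by
  obtain ⟨h1, h2, h3, h4⟩ := h _ _ _ _ h0
  exact hu (QuaternionAlgebra.ext h1 h2 h3 h4)

theorem qnrd_ne_zero_of_star_mul_mul_eq {t v u : QuaternionAlgebra K a 0 b}
    (h : star t * v * t = u) (hu : qnrd a b u ≠ 0) : qnrd a b t ≠ 0 := fun ht => by
  rw [← h, qnrd_mul, ht, mul_zero] at hu
  exact hu rfl

theorem qnrd_pure (α β γ : K) :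
    qnrd a b (⟨0, α, β, γ⟩ : QuaternionAlgebra K a 0 b) =
      -(a * α ^ 2 + b * (β ^ 2 - a * γ ^ 2)) := by
  simp only [qnrd]
  ring

theorem star_mul_imI_mul_eq_smul (α β γ e : K)
    (he : a * α ^ 2 * e ^ 2 = a * α ^ 2 + b * (β ^ 2 - a * γ ^ 2)) :
    star (⟨a * α * (1 + e), 0, a * γ, β⟩ : QuaternionAlgebra K a 0 b) * ⟨0, α, 0, 0⟩ *
        ⟨a * α * (1 + e), 0, a * γ, β⟩ =
      (2 * a ^ 2 * α ^ 2 * (1 + e)) • (⟨0, α, β, γ⟩ : QuaternionAlgebra K a 0 b) := by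
  simp only [QuaternionAlgebra.star_mk, QuaternionAlgebra.mk_mul_mk, QuaternionAlgebra.smul_mk,
    smul_eq_mul, QuaternionAlgebra.mk.injEq]
  exact ⟨by ring, by linear_combination a * α * he, by ring, by ring⟩

theorem exists_star_mul_imI_mul_eq {α β γ e p : K} (h2 : (2 : K) ≠ 0) (ha : a ≠ 0)
    (hα : α ≠ 0) (hp : p ≠ 0) (he : a * α ^ 2 * e ^ 2 = a * α ^ 2 + b * (β ^ 2 - a * γ ^ 2))
    (hp2 : 2 * p ^ 2 = 1 + e) :
    ∃ t : QuaternionAlgebra K a 0 b, star t * ⟨0, α, 0, 0⟩ * t = ⟨0, α, β, γ⟩ := by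
  refine ⟨(2 * a * α * p)⁻¹ • ⟨a * α * (1 + e), 0, a * γ, β⟩, ?_⟩
  rw [QuaternionAlgebra.star_smul', smul_mul_assoc, smul_mul_assoc, mul_smul_comm,
    star_mul_imI_mul_eq_smul α β γ e he, smul_smul, smul_smul, ← hp2]
  convert one_smul K _
  field_simp

end Quaternion

theorem stmt_5_general (K : Type) [Field K] (V : DVal K)
    -- K is complete with residue field of characteristic ≠ 2
    (hcomp : V.IsComplete) (hchar : V.ResCharNeTwo)
    -- D = ℍ[K,a,ϖ] with a ∈ O_K^×, ϖ a uniformizer, D a division ring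
    (a ϖ : K) (ha0 : a ≠ 0) (hva : V.ν a = 0) (hvϖ : V.ν ϖ = 1)
    (haniso : QAniso a ϖ)
    -- u = αx + βy + γz with coordinates in O_K and ν_D(u) = 0
    (α β γ : K) (hα : V.Int α) (hβ : V.Int β) (hγ : V.Int γ)
    (hu0 : (⟨0, α, β, γ⟩ : QuaternionAlgebra K a 0 ϖ) ≠ 0)
    (hval : qnu V a ϖ (⟨0, α, β, γ⟩ : QuaternionAlgebra K a 0 ϖ) = 0) :
    V.IntUnit α ∧ ∃ t : QuaternionAlgebra K a 0 ϖ, IsUnit t ∧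
      (⟨0, α, β, γ⟩ : QuaternionAlgebra K a 0 ϖ) =
        qtau t * (⟨0, α, 0, 0⟩ : QuaternionAlgebra K a 0 ϖ) * t := by
  have hnrd := qnrd_ne_zero_of_aniso haniso hu0
  have hsum0 : a * α ^ 2 + ϖ * (β ^ 2 - a * γ ^ 2) ≠ 0 := by
    simpa only [qnrd_pure, neg_ne_zero] using hnrd
  have hν : V.ν (a * α ^ 2 + ϖ * (β ^ 2 - a * γ ^ 2)) = 0 := by
    simpa only [qnu, qnrd_pure, DVal.ν_neg hsum0, div_eq_zero_iff, Int.cast_eq_zero,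
      two_ne_zero, or_false] using hval
  have ha : V.IntUnit a := ⟨ha0, hva⟩
  have hs : V.ValGe (ϖ * (β ^ 2 - a * γ ^ 2)) 1 := by
    have hβγ : V.ValGe (β * β - a * (γ * γ)) 0 := by
      simpa using (DVal.ValGe.mul hβ hβ).sub (ha.valGe.mul (DVal.ValGe.mul hγ hγ))
    simpa [sq] using DVal.ValGe.mul (V := V) (Or.inr hvϖ.ge) hβγ
  have hαu := DVal.intUnit_of_ν_mul_sq_add_eq_zero ha hα hs hsum0 hν
  obtain ⟨e, p, he, hp, hp0⟩ :=
    DVal.exists_mul_sq_eq_add_and_two_mul_sq_eq hcomp hchar (ha.mul (sq α ▸ hαu.mul hαu)) hs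
  obtain ⟨t, ht⟩ := exists_star_mul_imI_mul_eq hchar.1 ha0 hαu.1 hp0 he hp
  exact ⟨hαu, t, isUnit_of_qnrd_ne_zero (qnrd_ne_zero_of_star_mul_mul_eq ht hnrd),
    by rw [qtau_eq_star, ht]⟩

/-- if `u = αx + βy + γz` is a `(-1)`-symmetric unit of `O_D` then `α ∈ O_K^×`
and `⟨u⟩ ≅ ⟨αx⟩` over `(D, τ)`. -/
theorem stmt_5 (K : Type) [Field K] (V : DVal K)
    -- K is complete with residue field of characteristic ≠ 2
    (hcomp : V.IsComplete) (hchar : V.ResCharNeTwo)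
    -- D = ℍ[K,a,ϖ] with a ∈ O_K^×, ϖ a uniformizer, D a division ring
    (a ϖ : K) (ha0 : a ≠ 0) (hva : V.ν a = 0) (hϖ0 : ϖ ≠ 0) (hvϖ : V.ν ϖ = 1)
    (haniso : QAniso a ϖ)
    -- u = αx + βy + γz with coordinates in O_K and ν_D(u) = 0
    (α β γ : K) (hα : V.Int α) (hβ : V.Int β) (hγ : V.Int γ)
    (hu0 : (⟨0, α, β, γ⟩ : QuaternionAlgebra K a 0 ϖ) ≠ 0)
    (hval : qnu V a ϖ (⟨0, α, β, γ⟩ : QuaternionAlgebra K a 0 ϖ) = 0) :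
    V.IntUnit α ∧ ∃ t : QuaternionAlgebra K a 0 ϖ, IsUnit t ∧
      (⟨0, α, β, γ⟩ : QuaternionAlgebra K a 0 ϖ) =
        qtau t * (⟨0, α, 0, 0⟩ : QuaternionAlgebra K a 0 ϖ) * t :=
  stmt_5_general K V hcomp hchar a ϖ ha0 hva hvϖ haniso α β γ hα hβ hγ hu0 hval
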